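/- Let (Ω, 𝒜, τ) be a finite measure space and let f : Ω → [0, ∞) be a measurable function that is not τ-essentially bounded. Then there exists a measurable function h : Ω → [0, ∞) such that h > 0 τ-almost everywhere, ∫ h dτ < ∞, and ∫ f · h dτ = ∞. -/

import Mathlib

open MeasureTheory ENNReal NNReal

/-!
Put `Eₙ = {2ⁿ < f}`; since `f` is not essentially bounded, each `Eₙ` has positive (and finite)
measure. The weight `1 + ∑ₙ 2⁻ⁿ τ(Eₙ)⁻¹ 𝟙_{Eₙ}` has integral `τ(Ω) + ∑ₙ 2⁻ⁿ < ∞`, while against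
`f ≥ 2ⁿ` on `Eₙ` every summand contributes at least `1` to `∫ f h`.
-/

section GeometricWeight

variable {Ω : Type*} [MeasurableSpace Ω] {μ : Measure Ω} {E : ℕ → Set Ω}

lemma measure_lt_ne_zero_of_not_ae_le {f : Ω → ℝ≥0} (hub : ¬ ∃ C : ℝ≥0, ∀ᵐ ω ∂μ, f ω ≤ C)
    (C : ℝ≥0) : μ {ω | C < f ω} ≠ 0 := by
  intro h0
  refine hub ⟨C, ?_⟩
  rw [ae_iff]
  simpa only [not_le] using h0

lemma lintegral_tsum_indicator_const (hE : ∀ n, MeasurableSet (E n)) (c : ℕ → ℝ≥0∞) :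
    ∫⁻ ω, ∑' n, (E n).indicator (fun _ => c n) ω ∂μ = ∑' n, c n * μ (E n) := by
  rw [lintegral_tsum fun n => (measurable_const.indicator (hE n)).aemeasurable]
  simp only [lintegral_indicator_const (hE _)]

noncomputable def geometricWeight (μ : Measure Ω) (E : ℕ → Set Ω) (ω : Ω) : ℝ≥0∞ :=
  ∑' n, (E n).indicator (fun _ => 2⁻¹ ^ n / μ (E n)) ω

lemma measurable_geometricWeight (hE : ∀ n, MeasurableSet (E n)) :
    Measurable (geometricWeight μ E) :=
  Measurable.tsum fun n => measurable_const.indicator (hE n)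

lemma lintegral_geometricWeight (hE : ∀ n, MeasurableSet (E n)) (hE0 : ∀ n, μ (E n) ≠ 0)
    (hEtop : ∀ n, μ (E n) ≠ ∞) : ∫⁻ ω, geometricWeight μ E ω ∂μ = 2 := by
  unfold geometricWeight
  rw [lintegral_tsum_indicator_const hE]
  simp only [ENNReal.div_mul_cancel (hE0 _) (hEtop _), ENNReal.tsum_geometric_two]

lemma lintegral_mul_geometricWeight_eq_top (hE : ∀ n, MeasurableSet (E n))
    (hE0 : ∀ n, μ (E n) ≠ 0) (hEtop : ∀ n, μ (E n) ≠ ∞) {g : Ω → ℝ≥0∞}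
    (hg : ∀ n, ∀ ω ∈ E n, 2 ^ n ≤ g ω) :
    ∫⁻ ω, g ω * geometricWeight μ E ω ∂μ = ∞ := by
  have hle : ∀ ω, ∑' n, (E n).indicator (fun _ => 2 ^ n * (2⁻¹ ^ n / μ (E n))) ω
      ≤ g ω * geometricWeight μ E ω := fun ω => by
    rw [geometricWeight.eq_def, ← ENNReal.tsum_mul_left]
    refine ENNReal.tsum_le_tsum fun n => ?_
    by_cases hω : ω ∈ E n
    · simp only [Set.indicator_of_mem hω]
      gcongr
      exact hg n ω hω
    · simp only [Set.indicator_of_notMem hω, mul_zero, le_refl]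
  have hunit : ∀ n : ℕ, 2 ^ n * (2⁻¹ ^ n / μ (E n)) * μ (E n) = (1 : ℝ≥0∞) := fun n => by
    rw [mul_assoc, ENNReal.div_mul_cancel (hE0 n) (hEtop n), ← mul_pow,
      ENNReal.mul_inv_cancel two_ne_zero ofNat_ne_top, one_pow]
  refine eq_top_mono (lintegral_mono hle) ?_
  rw [lintegral_tsum_indicator_const hE, tsum_congr hunit]
  exact ENNReal.tsum_const_eq_top_of_ne_zero one_ne_zero

end GeometricWeight

/-- Let `(Ω, 𝒜, τ)` be a finite measure space and `f : Ω → [0, ∞)` a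
measurable function which is not `τ`-essentially bounded.  Then there is a measurable
`h : Ω → [0, ∞)` with `h > 0` `τ`-a.e., `∫ h dτ < ∞` and `∫ f · h dτ = ∞`. -/
theorem exists_integrable_weight_of_not_essentially_bounded
    {Ω : Type*} [MeasurableSpace Ω] (τ : Measure Ω) [IsFiniteMeasure τ]
    (f : Ω → ℝ≥0) (hf : Measurable f)
    (hub : ¬ ∃ C : ℝ≥0, ∀ᵐ ω ∂τ, f ω ≤ C) :
    ∃ h : Ω → ℝ≥0, Measurable h ∧ (∀ᵐ ω ∂τ, 0 < h ω) ∧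
      (∫⁻ ω, (h ω : ℝ≥0∞) ∂τ) < ∞ ∧
      (∫⁻ ω, (f ω : ℝ≥0∞) * (h ω : ℝ≥0∞) ∂τ) = ∞ := by
  set E : ℕ → Set Ω := fun n => {ω | (2 : ℝ≥0) ^ n < f ω}
  have hE : ∀ n, MeasurableSet (E n) := fun n => measurableSet_lt measurable_const hf
  have hE0 : ∀ n, τ (E n) ≠ 0 := fun n => measure_lt_ne_zero_of_not_ae_le hub _
  have hEtop : ∀ n, τ (E n) ≠ ∞ := fun n => measure_ne_top τ _
  have hfE : ∀ n, ∀ ω ∈ E n, 2 ^ n ≤ (f ω : ℝ≥0∞) := fun n ω hω => by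
    exact_mod_cast (show (2 : ℝ≥0) ^ n < f ω from hω).le
  set H : Ω → ℝ≥0∞ := fun ω => 1 + geometricWeight τ E ω
  have hH : Measurable H := measurable_const.add (measurable_geometricWeight hE)
  have hHint : ∫⁻ ω, H ω ∂τ < ∞ := by
    rw [lintegral_add_left measurable_const,
      lintegral_geometricWeight hE hE0 hEtop, lintegral_one]
    finiteness
  have hHcoe : ∀ᵐ ω ∂τ, ((H ω).toNNReal : ℝ≥0∞) = H ω := by
    filter_upwards [ae_lt_top hH hHint.ne] with ω hω using coe_toNNReal hω.ne
  refine ⟨fun ω => (H ω).toNNReal, hH.ennreal_toNNReal, ?_, ?_, ?_⟩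
  · filter_upwards [hHcoe] with ω hω
    rw [← ENNReal.coe_pos, hω]
    exact zero_lt_one.trans_le le_self_add
  · rwa [lintegral_congr_ae hHcoe]
  · rw [lintegral_congr_ae (hHcoe.mono fun ω hω => by rw [hω])]
    refine eq_top_mono (lintegral_mono fun ω => ?_)
      (lintegral_mul_geometricWeight_eq_top hE hE0 hEtop hfE)
    gcongr
    exact le_add_self
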